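/- arXiv:1510.07230 — 2 statements merged into one kernel-verified Lean document; each statement's English description precedes it below -/
import Mathlib

section
/- In the nonmonotone line search scheme with C^{(l+1)} = (η Q^{(l)} C^{(l)} + E^{(l+1)})/Q^{(l+1)}, Q^{(l+1)} = η Q^{(l)} + 1, Q^{(0)} = 1, if at every step E^{(l+1)} ≤ C^{(l)} − δ_l for some δ_l ≥ 0, then C^{(l+1)} ≤ C^{(l)} − δ_l / Q^{(l+1)}; in particular the sequence (C^{(l)}) is nonincreasing, and E^{(l)} ≤ C^{(l)} ≤ E^{(0)} for all l. -/
/-! `C (l + 1)` is the weighted average of `C l` (weight `η Q l ≥ 0`) and `E (l + 1)` (weight `1`).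
An average of `c` and a value `e ≤ c - d` lies below `c` by at least `d` divided by the total
weight, and above `e`. Hence the `C l` decrease, dominate the `E l`, and start at `E 0`. -/

lemma one_le_of_succ_eq_mul_add_one {η : ℝ} (hη : 0 ≤ η) {Q : ℕ → ℝ} (hQ0 : 1 ≤ Q 0)
    (hQ : ∀ l, Q (l + 1) = η * Q l + 1) (l : ℕ) : 1 ≤ Q l := by
  induction l with
  | zero => exact hQ0
  | succ l ih =>
    rw [hQ l]
    nlinarith

lemma weighted_avg_le_sub_div {w c e d : ℝ} (hw : 0 ≤ w) (he : e ≤ c - d) :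
    (w * c + e) / (w + 1) ≤ c - d / (w + 1) := by
  have hw1 : 0 < w + 1 := by linarith
  have hsplit : (w * c + e) / (w + 1) = c - (c - e) / (w + 1) := by
    field_simp
    ring
  rw [hsplit]
  gcongr
  linarith

lemma le_weighted_avg {w c e : ℝ} (hw : 0 ≤ w) (he : e ≤ c) : e ≤ (w * c + e) / (w + 1) := by
  rw [le_div_iff₀ (by linarith)]
  nlinarith

theorem nonmonotone_reference_decrease_general
    (η : ℝ) (hη0 : 0 ≤ η)
    (E C Q : ℕ → ℝ) (δ : ℕ → ℝ)
    (hQ0 : Q 0 = 1) (hC0 : C 0 = E 0)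
    (hQ : ∀ l, Q (l + 1) = η * Q l + 1)
    (hC : ∀ l, C (l + 1) = (η * Q l * C l + E (l + 1)) / Q (l + 1))
    (hδ : ∀ l, 0 ≤ δ l)
    (hdec : ∀ l, E (l + 1) ≤ C l - δ l) :
    (∀ l, C (l + 1) ≤ C l - δ l / Q (l + 1)) ∧
    (∀ l, C (l + 1) ≤ C l) ∧
    (∀ l, E l ≤ C l ∧ C l ≤ E 0) := by
  have hQ1 := one_le_of_succ_eq_mul_add_one hη0 hQ0.ge hQ
  have hweight : ∀ l, 0 ≤ η * Q l := fun l => mul_nonneg hη0 (zero_le_one.trans (hQ1 l))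
  have key : ∀ l, C (l + 1) ≤ C l - δ l / Q (l + 1) := fun l => by
    rw [hC l, hQ l]
    exact weighted_avg_le_sub_div (hweight l) (hdec l)
  have mono : ∀ l, C (l + 1) ≤ C l := fun l =>
    (key l).trans (sub_le_self _ (div_nonneg (hδ l) (zero_le_one.trans (hQ1 _))))
  have hEC : ∀ l, E l ≤ C l
    | 0 => hC0.ge
    | l + 1 => by
      rw [hC l, hQ l]
      exact le_weighted_avg (hweight l) ((hdec l).trans (sub_le_self _ (hδ l)))
  refine ⟨key, mono, fun l => ⟨hEC l, ?_⟩⟩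
  exact hC0 ▸ antitone_nat_of_succ_le mono (Nat.zero_le l)

theorem nonmonotone_reference_decrease
    (η : ℝ) (hη0 : 0 ≤ η) (hη1 : η < 1)
    (E C Q : ℕ → ℝ) (δ : ℕ → ℝ)
    (hQ0 : Q 0 = 1) (hC0 : C 0 = E 0)
    (hQ : ∀ l, Q (l + 1) = η * Q l + 1)
    (hC : ∀ l, C (l + 1) = (η * Q l * C l + E (l + 1)) / Q (l + 1))
    (hδ : ∀ l, 0 ≤ δ l)
    (hdec : ∀ l, E (l + 1) ≤ C l - δ l) :
    (∀ l, C (l + 1) ≤ C l - δ l / Q (l + 1)) ∧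
    (∀ l, C (l + 1) ≤ C l) ∧
    (∀ l, E l ≤ C l ∧ C l ≤ E 0) :=
  nonmonotone_reference_decrease_general η hη0 E C Q δ hQ0 hC0 hQ hC hδ hdec
end

section
/- If a sequence (E^{(l)}) of real numbers is bounded below and satisfies E^{(l+1)} ≤ C^{(l)} − ρ₁ τ^{(l)} s^{(l)} with the nonmonotone references C^{(l)} defined by C^{(0)} = E^{(0)}, C^{(l+1)} = (η Q^{(l)} C^{(l)} + E^{(l+1)})/Q^{(l+1)}, Q^{(l+1)} = η Q^{(l)} + 1, Q^{(0)} = 1, where ρ₁ > 0, η ∈ [0,1), τ^{(l)} ≥ τ_min > 0, and s^{(l)} ≥ 0, then Σ_{l=0}^∞ s^{(l)} < ∞; in particular s^{(l)} → 0. -/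
/-!
The reference value `C l` is the average of `E 0, …, E l` with weights summing to `Q l`, so it
never falls below a lower bound of `E`. Multiplying the recursion by `Q (l + 1)`, the sufficient
decrease condition makes `C` drop by at least `ρ₁ τ s / Q (l + 1) ≥ (1 - η) ρ₁ τmin s` per step,
and since `C` is bounded below these drops, hence the `s l`, have bounded partial sums.
-/

open Filter

theorem summable_of_le_sub_succ {f C : ℕ → ℝ} {m : ℝ} (hf : ∀ l, 0 ≤ f l)
    (hfC : ∀ l, f l ≤ C l - C (l + 1)) (hm : ∀ l, m ≤ C l) : Summable f :=
  summable_of_sum_range_le hf fun n => calc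
    ∑ i ∈ Finset.range n, f i ≤ ∑ i ∈ Finset.range n, (C i - C (i + 1)) :=
      Finset.sum_le_sum fun i _ => hfC i
    _ = C 0 - C n := Finset.sum_range_sub' C n
    _ ≤ C 0 - m := by linarith [hm n]

section NonmonotoneReference

variable {η : ℝ} {E C Q : ℕ → ℝ}

theorem one_le_weight (hη0 : 0 ≤ η) (hQ0 : Q 0 = 1) (hQ : ∀ l, Q (l + 1) = η * Q l + 1)
    (l : ℕ) : 1 ≤ Q l := by
  induction l with
  | zero => rw [hQ0]
  | succ n ih => rw [hQ n]; nlinarith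

theorem weight_mul_one_sub_le_one (hη0 : 0 ≤ η) (hQ0 : Q 0 = 1)
    (hQ : ∀ l, Q (l + 1) = η * Q l + 1) (l : ℕ) : Q l * (1 - η) ≤ 1 := by
  induction l with
  | zero => rw [hQ0]; linarith
  | succ n ih => rw [hQ n]; nlinarith

theorem weight_mul_reference_succ (hη0 : 0 ≤ η) (hQ0 : Q 0 = 1)
    (hQ : ∀ l, Q (l + 1) = η * Q l + 1)
    (hC : ∀ l, C (l + 1) = (η * Q l * C l + E (l + 1)) / Q (l + 1)) (l : ℕ) :
    (η * Q l + 1) * C (l + 1) = η * Q l * C l + E (l + 1) := by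
  rw [hC l, ← hQ l, mul_div_cancel₀ _ (one_pos.trans_le (one_le_weight hη0 hQ0 hQ (l + 1))).ne']

theorem le_reference (hη0 : 0 ≤ η) (hQ0 : Q 0 = 1) (hQ : ∀ l, Q (l + 1) = η * Q l + 1)
    (hC0 : C 0 = E 0) (hC : ∀ l, C (l + 1) = (η * Q l * C l + E (l + 1)) / Q (l + 1))
    {m : ℝ} (hm : ∀ l, m ≤ E l) (l : ℕ) : m ≤ C l := by
  induction l with
  | zero => exact hC0 ▸ hm 0
  | succ n ih =>
    have hηQ : 0 ≤ η * Q n := mul_nonneg hη0 (zero_le_one.trans (one_le_weight hη0 hQ0 hQ n))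
    refine le_of_mul_le_mul_left ?_ (by linarith : 0 < η * Q n + 1)
    rw [weight_mul_reference_succ hη0 hQ0 hQ hC n]
    nlinarith [hm (n + 1), mul_le_mul_of_nonneg_left ih hηQ]

theorem one_sub_mul_le_reference_sub_succ (hη0 : 0 ≤ η) (hQ0 : Q 0 = 1)
    (hQ : ∀ l, Q (l + 1) = η * Q l + 1)
    (hC : ∀ l, C (l + 1) = (η * Q l * C l + E (l + 1)) / Q (l + 1)) {d : ℝ} (hd : 0 ≤ d)
    {l : ℕ} (hE : E (l + 1) ≤ C l - d) : (1 - η) * d ≤ C l - C (l + 1) := by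
  have hdrop : d ≤ Q (l + 1) * (C l - C (l + 1)) := by
    rw [hQ l]; linarith [weight_mul_reference_succ hη0 hQ0 hQ hC l]
  have hQl := one_le_weight hη0 hQ0 hQ (l + 1)
  have hw := weight_mul_one_sub_le_one hη0 hQ0 hQ (l + 1)
  have hpos : 0 ≤ C l - C (l + 1) := by nlinarith
  nlinarith

end NonmonotoneReference

theorem nonmonotone_line_search_summable
    (η : ℝ) (hη0 : 0 ≤ η) (hη1 : η < 1)
    (E C Q : ℕ → ℝ) (ρ₁ : ℝ) (hρ₁ : 0 < ρ₁)
    (τ : ℕ → ℝ) (τmin : ℝ) (hτmin : 0 < τmin) (hτ : ∀ l, τmin ≤ τ l)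
    (s : ℕ → ℝ) (hs : ∀ l, 0 ≤ s l)
    (hbdd : ∃ m : ℝ, ∀ l, m ≤ E l)
    (hQ0 : Q 0 = 1) (hC0 : C 0 = E 0)
    (hQ : ∀ l, Q (l + 1) = η * Q l + 1)
    (hC : ∀ l, C (l + 1) = (η * Q l * C l + E (l + 1)) / Q (l + 1))
    (hdec : ∀ l, E (l + 1) ≤ C l - ρ₁ * τ l * s l) :
    Summable s ∧ Tendsto s atTop (nhds 0) := by
  obtain ⟨m, hm⟩ := hbdd
  have hc : 0 < (1 - η) * (ρ₁ * τmin) := by have := sub_pos.2 hη1; positivity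
  have hdescent : ∀ l, (1 - η) * (ρ₁ * τmin) * s l ≤ C l - C (l + 1) := fun l => by
    have hτl : 0 < ρ₁ * τ l := mul_pos hρ₁ (hτmin.trans_le (hτ l))
    calc (1 - η) * (ρ₁ * τmin) * s l ≤ (1 - η) * (ρ₁ * τ l * s l) := by
          rw [mul_assoc]; gcongr
          · exact hs l
          · exact hτ l
      _ ≤ C l - C (l + 1) :=
          one_sub_mul_le_reference_sub_succ hη0 hQ0 hQ hC (mul_nonneg hτl.le (hs l)) (hdec l)
  have hsum : Summable s := (summable_mul_left_iff hc.ne').1 <|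
    summable_of_le_sub_succ (fun l => mul_nonneg hc.le (hs l)) hdescent
      (le_reference hη0 hQ0 hQ hC0 hC hm)
  exact ⟨hsum, hsum.tendsto_atTop_zero⟩
end
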